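/- Let q be a positive definite quadratic form on R^2 and T a triangle. If σ_q(ψ_q³(T)) ≥ 5, then σ_q(ψ_q³(T)) ≤ 0.69·σ_q(T), where ψ_q³ denotes three iterations of the map ψ_q. -/

import Mathlib

open Matrix

/-- A triangle recorded through its edge vectors and its area. -/
structure Tri where
  e1 : Fin 2 → ℝ
  e2 : Fin 2 → ℝ
  e3 : Fin 2 → ℝ
  area : ℝ

/-- The data of `T` really comes from a nondegenerate triangle: the edge
vectors sum to zero and the area is the actual (positive) area. -/
def IsTri (T : Tri) : Prop :=
  T.e1 + T.e2 + T.e3 = 0 ∧ T.area = |T.e1 0 * T.e2 1 - T.e1 1 * T.e2 0| / 2 ∧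
    0 < T.area

/-- The quadratic form `v ↦ ⟨Qv, v⟩`. -/
noncomputable def qVal (Q : Matrix (Fin 2) (Fin 2) ℝ) (v : Fin 2 → ℝ) : ℝ :=
  Q.mulVec v ⬝ᵥ v

/-- The non-degeneracy measure `σ_q(T)`: the sum of the two smallest of the
`q`-squared-lengths of the edges, divided by `4|T|√(det Q)`. -/
noncomputable def sigmaQ (Q : Matrix (Fin 2) (Fin 2) ℝ) (T : Tri) : ℝ :=
  (qVal Q T.e1 + qVal Q T.e2 + qVal Q T.e3 -
      max (max (qVal Q T.e1) (qVal Q T.e2)) (qVal Q T.e3)) /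
    (4 * T.area * Real.sqrt Q.det)

/-- `S = ψ_q(T)`: `S` is the child of the bisection of a `q`-longest edge of
`T` containing a `q`-shortest edge; if the edges of `T` are `a, b, c` with
`q(a) ≥ q(b) ≥ q(c)`, then `S` has edges `c, a/2, (b−c)/2` and area `|T|/2`. -/
def PsiChild (Q : Matrix (Fin 2) (Fin 2) ℝ) (T S : Tri) : Prop :=
  ∃ a b c : Fin 2 → ℝ,
    ({T.e1, T.e2, T.e3} : Multiset (Fin 2 → ℝ)) = {a, b, c} ∧
    qVal Q b ≤ qVal Q a ∧ qVal Q c ≤ qVal Q b ∧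
    S.area = T.area / 2 ∧
    ({S.e1, S.e2, S.e3} : Multiset (Fin 2 → ℝ)) =
      {c, (1 / 2 : ℝ) • a, (1 / 2 : ℝ) • (b - c)}

/-!
Write `P = |T|√det q` and let `A ≥ B ≥ C` be the `q`-squared edge lengths of `T`, so that
`σ_q(T) = (B + C)/4P`, `ρ_q(T) = A/P` and, by Heron's formula in the metric `q`,
`2AB + 2BC + 2CA - A² - B² - C² = 16P²`. The child `ψ_q(T)` has `P/2` in place of `P` and
squared edge lengths `C, A/4, (2B + 2C - A)/4`, the last one by the parallelogram law. Since the
two largest of these sum to at most `(B + C)/2`, `σ_q` does not increase, and Heron's formula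
bounds each of them by `A/4 + 4P²/A`, which gives `ρ_q(ψ_q T) ≤ ρ_q(T)/2 + 8/ρ_q(T)`.
Starting from `σ_q(ψ_q³ T) ≥ 5`, all the `ρ_q` along the chain are at least `10`, so `ρ_q`
roughly halves at each step while `ρ_q/8 ≤ σ_q ≤ ρ_q/2`; three steps give the factor `0.69`.
-/

theorem Multiset.apply_eq_of_triple_eq {α β : Type*} (f : α → α → α → β)
    (h12 : ∀ x y z, f x y z = f y x z) (h23 : ∀ x y z, f x y z = f x z y)
    {x y z a b c : α} (h : ({x, y, z} : Multiset α) = {a, b, c}) : f x y z = f a b c := by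
  have hmem := List.mem_permutations'.2 (Multiset.coe_eq_coe.1 h : [x, y, z].Perm [a, b, c])
  simp only [List.permutations', List.permutations'Aux, List.flatMap_cons, List.flatMap_nil,
    List.map_cons, List.map_nil, List.append_nil, List.cons_append, List.nil_append,
    List.mem_cons, List.mem_nil_iff, List.cons.injEq, and_true, or_false] at hmem
  rcases hmem with ⟨rfl, rfl, rfl⟩ | ⟨rfl, rfl, rfl⟩ | ⟨rfl, rfl, rfl⟩ | ⟨rfl, rfl, rfl⟩ |
    ⟨rfl, rfl, rfl⟩ | ⟨rfl, rfl, rfl⟩ <;> grind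

lemma add_add_eq_of_triple_eq {M : Type*} [AddCommMonoid M] {u v w a b c : M}
    (h : ({u, v, w} : Multiset M) = {a, b, c}) : u + v + w = a + b + c :=
  Multiset.apply_eq_of_triple_eq (fun x y z => x + y + z) (fun _ _ _ => by abel)
    (fun _ _ _ => by abel) h

/-- For squared edge lengths `x, y, z` of a Euclidean triangle, `heron x y z = 16 · area²`. -/
def heron (x y z : ℝ) : ℝ :=
  2 * x * y + 2 * y * z + 2 * z * x - x ^ 2 - y ^ 2 - z ^ 2

noncomputable def rhoQ (Q : Matrix (Fin 2) (Fin 2) ℝ) (T : Tri) : ℝ :=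
  max (max (qVal Q T.e1) (qVal Q T.e2)) (qVal Q T.e3) / (T.area * Real.sqrt Q.det)

noncomputable def qLengths (Q : Matrix (Fin 2) (Fin 2) ℝ) (T : Tri) : Multiset ℝ :=
  Multiset.map (qVal Q) {T.e1, T.e2, T.e3}

/-- A weakening of `IsTri` that is visibly preserved by `ψ_q`: the area is recovered from the
`q`-lengths of the edges by Heron's formula. -/
def IsQTri (Q : Matrix (Fin 2) (Fin 2) ℝ) (T : Tri) : Prop :=
  T.e1 + T.e2 + T.e3 = 0 ∧ 0 < T.area ∧
    heron (qVal Q T.e1) (qVal Q T.e2) (qVal Q T.e3) = 16 * (T.area * Real.sqrt Q.det) ^ 2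

lemma heron_bisect (A B C : ℝ) :
    heron C (A / 4) ((2 * B + 2 * C - A) / 4) = heron A B C / 4 := by
  unfold heron
  ring

lemma max_bisect_mul_le {A B C : ℝ} (hC : 0 ≤ C) (hCB : C ≤ B) (hBA : B ≤ A)
    (hH : 0 ≤ heron A B C) :
    max (max C (A / 4)) ((2 * B + 2 * C - A) / 4) * A ≤ A ^ 2 / 4 + heron A B C / 4 := by
  have hA : 0 ≤ A := hC.trans (hCB.trans hBA)
  rw [max_mul_of_nonneg _ _ hA, max_mul_of_nonneg _ _ hA]
  unfold heron at hH ⊢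
  refine max_le (max_le ?_ ?_) ?_
  · nlinarith [mul_nonneg (sub_nonneg.2 hCB) (by linarith : 0 ≤ 2 * A - B + C)]
  · nlinarith
  · nlinarith [mul_nonneg (by linarith : 0 ≤ A - B + C) (by linarith : 0 ≤ A + B - C)]

lemma max_le_two_mul_of_heron_nonneg {x y z : ℝ} (hx : 0 ≤ x) (hy : 0 ≤ y) (hz : 0 ≤ z)
    (hH : 0 ≤ heron x y z) : max (max x y) z ≤ 2 * (x + y + z - max (max x y) z) := by
  unfold heron at hH
  rcases max_choice (max x y) z with h | h <;> rw [h]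
  · rcases max_choice x y with h' | h' <;> rw [h'] <;>
      nlinarith [sq_nonneg (x - y), sq_nonneg (y - z), sq_nonneg (z - x)]
  · nlinarith [sq_nonneg (x - y)]

section qVal

variable (Q : Matrix (Fin 2) (Fin 2) ℝ)

lemma qVal_smul (t : ℝ) (v : Fin 2 → ℝ) : qVal Q (t • v) = t ^ 2 * qVal Q v := by
  simp only [qVal, mulVec_smul, smul_dotProduct, dotProduct_smul, smul_eq_mul]
  ring

lemma qVal_neg (v : Fin 2 → ℝ) : qVal Q (-v) = qVal Q v := by
  simp only [qVal, mulVec_neg, neg_dotProduct, dotProduct_neg, neg_neg]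

lemma qVal_add_add_qVal_sub (u v : Fin 2 → ℝ) :
    qVal Q (u + v) + qVal Q (u - v) = 2 * qVal Q u + 2 * qVal Q v := by
  simp only [qVal, mulVec_add, mulVec_sub, add_dotProduct, dotProduct_add, sub_dotProduct,
    dotProduct_sub]
  ring

end qVal

lemma qVal_nonneg {Q : Matrix (Fin 2) (Fin 2) ℝ} (hQ : Q.PosSemidef) (v : Fin 2 → ℝ) :
    0 ≤ qVal Q v := by
  simpa [qVal, dotProduct_comm] using hQ.dotProduct_mulVec_nonneg v

lemma heron_qVal {Q : Matrix (Fin 2) (Fin 2) ℝ} (hQ : Q.IsSymm) (u v : Fin 2 → ℝ) :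
    heron (qVal Q u) (qVal Q v) (qVal Q (u + v)) = 4 * Q.det * (u 0 * v 1 - u 1 * v 0) ^ 2 := by
  simp only [heron, qVal, det_fin_two, mulVec, dotProduct, Fin.sum_univ_two, Pi.add_apply,
    hQ.apply 1 0]
  ring

lemma IsTri.isQTri {Q : Matrix (Fin 2) (Fin 2) ℝ} (hQ : Q.IsSymm) (hdet : 0 ≤ Q.det) {T : Tri}
    (hT : IsTri T) : IsQTri Q T := by
  obtain ⟨hsum, harea, hpos⟩ := hT
  refine ⟨hsum, hpos, ?_⟩
  have he3 : T.e3 = -(T.e1 + T.e2) := eq_neg_of_add_eq_zero_right hsum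
  rw [he3, qVal_neg, heron_qVal hQ, mul_pow, Real.sq_sqrt hdet, harea, div_pow, sq_abs]
  ring

section qLengths

variable {Q : Matrix (Fin 2) (Fin 2) ℝ} {T : Tri} {x y z : ℝ}

lemma qLengths_eq_iff :
    qLengths Q T = {x, y, z} ↔
      ({qVal Q T.e1, qVal Q T.e2, qVal Q T.e3} : Multiset ℝ) = {x, y, z} := by
  simp [qLengths]

lemma sigmaQ_eq_of_qLengths_eq (h : qLengths Q T = {x, y, z}) :
    sigmaQ Q T = (x + y + z - max (max x y) z) / (4 * T.area * Real.sqrt Q.det) :=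
  Multiset.apply_eq_of_triple_eq (fun x y z => (x + y + z - max (max x y) z) / _)
    (fun x y z => by rw [max_comm x y, add_comm x y])
    (fun x y z => by rw [max_right_comm, add_right_comm]) (qLengths_eq_iff.1 h)

lemma rhoQ_eq_of_qLengths_eq (h : qLengths Q T = {x, y, z}) :
    rhoQ Q T = max (max x y) z / (T.area * Real.sqrt Q.det) :=
  Multiset.apply_eq_of_triple_eq (fun x y z => max (max x y) z / _)
    (fun x y z => by rw [max_comm x y]) (fun x y z => by rw [max_right_comm])
    (qLengths_eq_iff.1 h)

lemma heron_qVal_eq_of_qLengths_eq (h : qLengths Q T = {x, y, z}) :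
    heron (qVal Q T.e1) (qVal Q T.e2) (qVal Q T.e3) = heron x y z :=
  Multiset.apply_eq_of_triple_eq heron (fun _ _ _ => by unfold heron; ring)
    (fun _ _ _ => by unfold heron; ring) (qLengths_eq_iff.1 h)

end qLengths

section PsiChild

variable {Q : Matrix (Fin 2) (Fin 2) ℝ} {T S : Tri}

lemma PsiChild.exists_qLengths_eq (hsum : T.e1 + T.e2 + T.e3 = 0) (h : PsiChild Q T S) :
    ∃ A B C : ℝ, C ≤ B ∧ B ≤ A ∧ qLengths Q T = {A, B, C} ∧
      qLengths Q S = {C, A / 4, (2 * B + 2 * C - A) / 4} ∧ S.area = T.area / 2 := by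
  obtain ⟨a, b, c, hT, hba, hcb, harea, hS⟩ := h
  have hbc : qVal Q (b - c) = 2 * qVal Q b + 2 * qVal Q c - qVal Q a := by
    have ha : a = -(b + c) := by
      rw [add_add_eq_of_triple_eq hT, add_assoc] at hsum
      exact eq_neg_of_add_eq_zero_left hsum
    rw [← qVal_add_add_qVal_sub, ha, qVal_neg]
    ring
  refine ⟨qVal Q a, qVal Q b, qVal Q c, hcb, hba, ?_, ?_, harea⟩
  · rw [qLengths, hT]
    simp
  · rw [qLengths, hS]
    norm_num [qVal_smul, hbc, div_eq_inv_mul]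

lemma PsiChild.sum_eq_zero (hsum : T.e1 + T.e2 + T.e3 = 0) (h : PsiChild Q T S) :
    S.e1 + S.e2 + S.e3 = 0 := by
  obtain ⟨a, b, c, hT, -, -, -, hS⟩ := h
  rw [add_add_eq_of_triple_eq hT] at hsum
  rw [add_add_eq_of_triple_eq hS]
  linear_combination (norm := module) (1 / 2 : ℝ) • hsum

lemma PsiChild.isQTri (hT : IsQTri Q T) (h : PsiChild Q T S) : IsQTri Q S := by
  obtain ⟨hsum, hpos, hheron⟩ := hT
  obtain ⟨A, B, C, -, -, hTq, hSq, harea⟩ := h.exists_qLengths_eq hsum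
  refine ⟨h.sum_eq_zero hsum, by linarith, ?_⟩
  rw [heron_qVal_eq_of_qLengths_eq hSq, heron_bisect, ← heron_qVal_eq_of_qLengths_eq hTq, hheron,
    harea]
  ring

lemma PsiChild.sigmaQ_le (hT : IsQTri Q T) (h : PsiChild Q T S) : sigmaQ Q S ≤ sigmaQ Q T := by
  obtain ⟨hsum, hpos, -⟩ := hT
  obtain ⟨A, B, C, hCB, hBA, hTq, hSq, harea⟩ := h.exists_qLengths_eq hsum
  have hmax : max (max A B) C = A := by rw [max_eq_left hBA, max_eq_left (hCB.trans hBA)]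
  rw [sigmaQ_eq_of_qLengths_eq hSq, sigmaQ_eq_of_qLengths_eq hTq, hmax, harea,
    show 4 * (T.area / 2) * √Q.det = 4 * T.area * √Q.det / 2 by ring, div_div_eq_mul_div]
  gcongr
  linarith [le_max_left C (A / 4), le_max_left (max C (A / 4)) ((2 * B + 2 * C - A) / 4)]

lemma PsiChild.rhoQ_le (hQ : Q.PosDef) (hT : IsQTri Q T) (h : PsiChild Q T S) :
    rhoQ Q S ≤ rhoQ Q T / 2 + 8 / rhoQ Q T := by
  obtain ⟨hsum, hpos, hheron⟩ := hT
  obtain ⟨A, B, C, hCB, hBA, hTq, hSq, harea⟩ := h.exists_qLengths_eq hsum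
  have hmax : max (max A B) C = A := by rw [max_eq_left hBA, max_eq_left (hCB.trans hBA)]
  have hC : 0 ≤ C := by
    obtain ⟨v, -, hv⟩ := Multiset.mem_map.1 (hTq ▸ by simp : C ∈ qLengths Q T)
    exact hv ▸ qVal_nonneg hQ.posSemidef v
  have hP : 0 < T.area * √Q.det := mul_pos hpos (Real.sqrt_pos.2 hQ.det_pos)
  rw [heron_qVal_eq_of_qLengths_eq hTq] at hheron
  rw [rhoQ_eq_of_qLengths_eq hSq, rhoQ_eq_of_qLengths_eq hTq, hmax, harea, div_mul_eq_mul_div]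
  generalize T.area * √Q.det = P at hP hheron ⊢
  have hA : 0 < A := by
    unfold heron at hheron
    nlinarith
  have key := max_bisect_mul_le hC hCB hBA (hheron ▸ by positivity)
  generalize max (max C (A / 4)) ((2 * B + 2 * C - A) / 4) = M at key ⊢
  rw [show M / (P / 2) = 2 * (M * A) / (A * P) by field_simp,
    show A / P / 2 + 8 / (A / P) = 2 * (A ^ 2 / 4 + 4 * P ^ 2) / (A * P) by field_simp; ring]
  gcongr
  linarith

end PsiChild

lemma two_mul_sigmaQ_le_rhoQ (Q : Matrix (Fin 2) (Fin 2) ℝ) {T : Tri} (hT : 0 ≤ T.area) :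
    2 * sigmaQ Q T ≤ rhoQ Q T := by
  rw [sigmaQ, rhoQ, show ∀ N : ℝ, 2 * (N / (4 * T.area * √Q.det)) = N / 2 / (T.area * √Q.det)
    by intro N; ring]
  gcongr
  linarith [le_max_left (max (qVal Q T.e1) (qVal Q T.e2)) (qVal Q T.e3),
    le_max_right (max (qVal Q T.e1) (qVal Q T.e2)) (qVal Q T.e3),
    le_max_left (qVal Q T.e1) (qVal Q T.e2), le_max_right (qVal Q T.e1) (qVal Q T.e2)]

lemma IsQTri.rhoQ_le_eight_mul_sigmaQ {Q : Matrix (Fin 2) (Fin 2) ℝ} (hQ : Q.PosSemidef)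
    {T : Tri} (hT : IsQTri Q T) : rhoQ Q T ≤ 8 * sigmaQ Q T := by
  obtain ⟨-, hpos, hheron⟩ := hT
  rw [sigmaQ, rhoQ, show ∀ N : ℝ, 8 * (N / (4 * T.area * √Q.det)) = 2 * N / (T.area * √Q.det)
    by intro N; ring]
  gcongr
  exact max_le_two_mul_of_heron_nonneg (qVal_nonneg hQ _) (qVal_nonneg hQ _) (qVal_nonneg hQ _)
    (hheron ▸ by positivity)

/-- if `σ_q(ψ_q³(T)) ≥ 5` then `σ_q(ψ_q³(T)) ≤ 0.69·σ_q(T)`. -/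
theorem stmt12 (Q : Matrix (Fin 2) (Fin 2) ℝ) (hQ : Q.PosDef)
    (T T1 T2 T3 : Tri) (hT : IsTri T)
    (h1 : PsiChild Q T T1) (h2 : PsiChild Q T1 T2) (h3 : PsiChild Q T2 T3)
    (h5 : 5 ≤ sigmaQ Q T3) : sigmaQ Q T3 ≤ 0.69 * sigmaQ Q T := by
  have hT0 : IsQTri Q T := hT.isQTri (isHermitian_iff_isSymm.1 hQ.isHermitian) hQ.det_pos.le
  have hT1 := h1.isQTri hT0
  have hT2 := h2.isQTri hT1
  have hstep {U V : Tri} (hU : IsQTri Q U) (h : PsiChild Q U V) (hσ : 5 ≤ sigmaQ Q U) :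
      rhoQ Q V ≤ rhoQ Q U / 2 + 4 / 5 := by
    have h10 : 10 ≤ rhoQ Q U := by linarith [two_mul_sigmaQ_le_rhoQ Q hU.2.1.le]
    have h8 : 8 / rhoQ Q U ≤ 4 / 5 := by rw [div_le_iff₀ (by linarith)]; linarith
    linarith [h.rhoQ_le hQ hU]
  have hσ3 := h3.sigmaQ_le hT2
  have hσ2 := h2.sigmaQ_le hT1
  have hσ1 := h1.sigmaQ_le hT0
  have hρ1 := hstep hT0 h1 (by linarith)
  have hρ2 := hstep hT1 h2 (by linarith)
  have hρ3 := hstep hT2 h3 (by linarith)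
  rw [show (0.69 : ℝ) = 69 / 100 by norm_num]
  linarith [two_mul_sigmaQ_le_rhoQ Q (h3.isQTri hT2).2.1.le,
    hT0.rhoQ_le_eight_mul_sigmaQ hQ.posSemidef]
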